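/- Let N ≥ 1 and let u : B̄₁(0) × [−1,0] → ℝ be a nonnegative classical supersolution of the heat equation (∂_t u − Δu ≥ 0 in B₁(0) × (−1,0], u continuous up to the boundary) with u(x, −1) ≥ 1 for all |x| ≤ δ, where 0 < δ ≤ 1/4. Then there exist constants γ > 0 and α > 0 depending only on N (explicitly, any α > C₀(C₀+8)/(3/2) with C₀ = 2(1/4 − δ²) + 1 + 4N works, and γ = (1/2)⁴) such that u(x, 0) ≥ γ·δ^{2α−4} for all |x| ≤ 1/2. -/

import Mathlib

/-
Compare `u` with `c ψ`, where `ψ(x, t) = (g t - ‖x‖²)² (g t)^(-α)` and `g t = a (1 + t) + δ²`,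
on the region `‖x‖² ≤ g t`, `-1 ≤ t ≤ 0`. The condition `(2a + 4N + 8)² ≤ 32 a α` on the exponent
makes `ψ` a subsolution of the heat equation there; `ψ` vanishes on the lateral boundary, and at
`t = -1` it is supported in `‖x‖ ≤ δ` with maximum `δ^(4 - 2α)`, so `c = δ^(2α - 4)` puts `c ψ`
below `u` on the whole parabolic boundary. The weak minimum principle, proved from the first- and
second-derivative tests at a minimum of `u - c ψ + ε t`, gives `c ψ ≤ u`. Choosing
`a = 9/16 - δ²` makes `g 0 = 9/16`, so `ψ(x, 0) ≥ (5/16)² ≥ (1/2)⁴` for `‖x‖ ≤ 1/2`.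
-/

open Metric Set Filter Topology Laplacian InnerProductSpace Module

theorem HasDerivAt.nonpos_of_isMinFilter_nhdsLT {f : ℝ → ℝ} {m a : ℝ} (hf : HasDerivAt f m a)
    (hmin : IsMinFilter f (𝓝[<] a) a) : m ≤ 0 := by
  have hslope := hasDerivWithinAt_iff_tendsto_slope' (s := Iio a) (lt_irrefl a) |>.1
    (hf.hasDerivWithinAt (s := Iio a))
  refine le_of_tendsto hslope ?_
  filter_upwards [hmin, self_mem_nhdsWithin] with s hs (hsa : s < a)
  rw [slope_def_field]
  exact div_nonpos_of_nonneg_of_nonpos (sub_nonneg.2 hs) (sub_nonpos.2 hsa.le)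

theorem IsLocalMin.deriv_deriv_nonneg {f : ℝ → ℝ} {a : ℝ} (hmin : IsLocalMin f a)
    (hf : ContinuousAt f a) : 0 ≤ deriv (deriv f) a := by
  by_contra! hneg
  have hmax := isLocalMax_of_deriv_deriv_neg hneg hmin.deriv_eq_zero hf
  have hconst : f =ᶠ[𝓝 a] fun _ => f a := by
    filter_upwards [hmin, hmax] with s h₁ h₂ using le_antisymm h₂ h₁
  have := hconst.deriv.deriv_eq
  simp [this] at hneg

theorem deriv_deriv_sq_quadratic (A B C : ℝ) :
    deriv (deriv fun s : ℝ => (A - B * s - C * s ^ 2) ^ 2) 0 = 2 * B ^ 2 - 4 * A * C := by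
  have hq : ∀ s : ℝ, HasDerivAt (fun s : ℝ => A - B * s - C * s ^ 2) (-B - 2 * C * s) s :=
    fun s => by
      refine (((hasDerivAt_id s).const_mul B).const_sub A |>.sub
        ((hasDerivAt_pow 2 s).const_mul C)).congr_deriv ?_
      simp only [mul_one, Nat.cast_ofNat, Nat.add_one_sub_one, pow_one]; ring
  have h : ∀ s : ℝ, HasDerivAt (fun s : ℝ => (A - B * s - C * s ^ 2) ^ 2)
      (2 * (A - B * s - C * s ^ 2) * (-B - 2 * C * s)) s := fun s => by
    refine ((hq s).fun_pow 2).congr_deriv ?_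
    simp
  have h' : HasDerivAt (fun s : ℝ => 2 * (A - B * s - C * s ^ 2) * (-B - 2 * C * s))
      (2 * B ^ 2 - 4 * A * C) 0 := by
    refine (((hq 0).const_mul 2).mul
      (((hasDerivAt_id (0 : ℝ)).const_mul (2 * C)).const_sub (-B))).congr_deriv ?_
    simp only [id_eq, mul_one, mul_zero, sub_zero]; ring
  rw [funext fun s => (h s).deriv]
  exact h'.deriv

section NormedSpace

variable {E : Type*} [NormedAddCommGroup E] [NormedSpace ℝ E]

theorem ContDiffAt.deriv_deriv_comp_line {f : E → ℝ} {x : E} (hf : ContDiffAt ℝ 2 f x) (v : E) :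
    deriv (deriv fun s : ℝ => f (x + s • v)) 0 = iteratedFDeriv ℝ 2 f x ![v, v] := by
  have hline : ∀ s : ℝ, HasDerivAt (fun s : ℝ => x + s • v) v s := fun s => by
    simpa using ((hasDerivAt_id s).smul_const v).const_add x
  have hdiff : ∀ᶠ s in 𝓝 (0 : ℝ), DifferentiableAt ℝ f (x + s • v) := by
    have hcont : Tendsto (fun s : ℝ => x + s • v) (𝓝 0) (𝓝 x) := by
      simpa using (hline 0).continuousAt.tendsto
    have h2 : ∀ᶠ y in 𝓝 x, ContDiffAt ℝ 2 f y := hf.eventually (by simp)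
    exact hcont.eventually (h2.mono fun y hy => hy.differentiableAt (by norm_num))
  have hderiv : deriv (fun s : ℝ => f (x + s • v)) =ᶠ[𝓝 0] fun s => fderiv ℝ f (x + s • v) v := by
    filter_upwards [hdiff] with s hs
    exact (hs.hasFDerivAt.comp_hasDerivAt s (hline s)).deriv
  have hf' : HasFDerivAt (fderiv ℝ f) (fderiv ℝ (fderiv ℝ f) x) (x + (0 : ℝ) • v) := by
    rw [zero_smul, add_zero]
    exact ((hf.fderiv_right (m := 1) le_rfl).differentiableAt one_ne_zero).hasFDerivAt
  have h : HasDerivAt (fun s : ℝ => fderiv ℝ f (x + s • v) v) (fderiv ℝ (fderiv ℝ f) x v v) 0 := by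
    have h1 : HasFDerivAt (fun y => fderiv ℝ f y v) ((fderiv ℝ (fderiv ℝ f) x).flip v)
        (x + (0 : ℝ) • v) := by
      simpa using hf'.clm_apply (hasFDerivAt_const v _)
    exact h1.comp_hasDerivAt (0 : ℝ) (hline 0)
  rw [hderiv.deriv_eq, iteratedFDeriv_two_apply]
  exact h.deriv

theorem IsLocalMin.iteratedFDeriv_two_nonneg {f : E → ℝ} {x : E} (hmin : IsLocalMin f x)
    (hf : ContDiffAt ℝ 2 f x) (v : E) : 0 ≤ iteratedFDeriv ℝ 2 f x ![v, v] := by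
  have hline : ContinuousAt (fun s : ℝ => x + s • v) 0 := by fun_prop
  have hx : x + (0 : ℝ) • v = x := by simp
  rw [← hf.deriv_deriv_comp_line]
  refine IsLocalMin.deriv_deriv_nonneg ?_ ?_
  · exact IsLocalMin.comp_continuous (by rwa [hx]) hline
  · exact ContinuousAt.comp (by rw [hx]; exact hf.continuousAt) hline

end NormedSpace

variable {E : Type*} [NormedAddCommGroup E]

noncomputable def heatBarrier (g : ℝ → ℝ) (α : ℝ) (x : E) (t : ℝ) : ℝ :=
  (g t - ‖x‖ ^ 2) ^ 2 * g t ^ (-α)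

variable {g : ℝ → ℝ} {α a t : ℝ}

theorem heatBarrier_eq_zero_of_norm_sq_eq {x : E} (hx : ‖x‖ ^ 2 = g t) :
    heatBarrier g α x t = 0 := by
  simp [heatBarrier, hx]

theorem heatBarrier_le_of_norm_sq_le {x : E} (hx : ‖x‖ ^ 2 ≤ g t) :
    heatBarrier g α x t ≤ g t ^ 2 * g t ^ (-α) := by
  have hg : 0 ≤ g t := (sq_nonneg _).trans hx
  unfold heatBarrier
  gcongr
  linarith [sq_nonneg ‖x‖]

theorem sq_sub_norm_sq_le_heatBarrier {x : E} (hα : 0 ≤ α) (hg₀ : 0 < g t) (hg₁ : g t ≤ 1) :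
    (g t - ‖x‖ ^ 2) ^ 2 ≤ heatBarrier g α x t :=
  le_mul_of_one_le_right (sq_nonneg _)
    (Real.one_le_rpow_of_pos_of_le_one_of_nonpos hg₀ hg₁ (neg_nonpos.2 hα))

theorem hasDerivAt_heatBarrier (x : E) (hg : HasDerivAt g a t) (hgt : 0 < g t) :
    HasDerivAt (heatBarrier g α x)
      (a * g t ^ (-α - 1) * ((g t - ‖x‖ ^ 2) * (2 * g t - α * (g t - ‖x‖ ^ 2)))) t := by
  have hpow := (Real.hasDerivAt_rpow_const (p := -α) (Or.inl hgt.ne')).comp t hg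
  refine (((hg.sub_const (‖x‖ ^ 2)).fun_pow 2).mul hpow).congr_deriv ?_
  have hsplit : g t ^ (-α) = g t ^ (-α - 1) * g t := by
    rw [← Real.rpow_add_one hgt.ne']; ring_nf
  simp only [Function.comp, hsplit]
  push_cast
  ring

theorem continuousOn_heatBarrier (hg : Continuous g) {s : Set (E × ℝ)}
    (hs : ∀ p ∈ s, g p.2 ≠ 0) : ContinuousOn (fun p : E × ℝ => heatBarrier g α p.1 p.2) s :=
  (((hg.comp continuous_snd).sub (by fun_prop)).pow 2).continuousOn.mul
    ((hg.comp continuous_snd).continuousOn.rpow_const fun p hp => Or.inl (hs p hp))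

def paraboloidDomain (g : ℝ → ℝ) : Set (E × ℝ) := {p | p.2 ∈ Icc (-1) 0 ∧ ‖p.1‖ ^ 2 ≤ g p.2}

theorem paraboloidDomain_subset (hg : ∀ t ∈ Icc (-1 : ℝ) 0, g t ≤ 1) :
    paraboloidDomain g ⊆ (closedBall (0 : E) 1 ×ˢ Icc (-1) 0) := by
  rintro ⟨x, t⟩ ⟨ht, hx⟩
  refine ⟨?_, ht⟩
  rw [mem_closedBall_zero_iff]
  nlinarith [norm_nonneg x, hg t ht]

theorem isCompact_paraboloidDomain [ProperSpace E] (hg : Continuous g)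
    (hg₁ : ∀ t ∈ Icc (-1 : ℝ) 0, g t ≤ 1) : IsCompact (paraboloidDomain (E := E) g) := by
  refine ((isCompact_closedBall 0 1).prod isCompact_Icc).of_isClosed_subset ?_
    (paraboloidDomain_subset hg₁)
  exact (isClosed_Icc.preimage continuous_snd).inter
    (isClosed_le (by fun_prop) (hg.comp continuous_snd))

theorem eventually_nhds_mem_paraboloidDomain {x : E} {t : ℝ}
    (ht : t ∈ Icc (-1 : ℝ) 0) (hx : ‖x‖ ^ 2 < g t) :
    ∀ᶠ y in 𝓝 x, (y, t) ∈ paraboloidDomain g := by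
  have : ∀ᶠ y in 𝓝 x, ‖y‖ ^ 2 < g t :=
    (continuous_norm.pow 2).continuousAt.eventually (gt_mem_nhds hx)
  exact this.mono fun y hy => ⟨ht, hy.le⟩

theorem eventually_nhdsLT_mem_paraboloidDomain (hg : Continuous g) {x : E} {t : ℝ}
    (ht : t ∈ Ioc (-1 : ℝ) 0) (hx : ‖x‖ ^ 2 < g t) :
    ∀ᶠ s in 𝓝[<] t, (x, s) ∈ paraboloidDomain g := by
  have hgx : ∀ᶠ s in 𝓝 t, ‖x‖ ^ 2 < g s := hg.continuousAt.eventually (lt_mem_nhds hx)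
  filter_upwards [nhdsWithin_le_nhds hgx, nhdsWithin_le_nhds (Ioi_mem_nhds ht.1),
    self_mem_nhdsWithin] with s hs hs₁ (hs₂ : s < t)
  exact ⟨⟨le_of_lt hs₁, hs₂.le.trans ht.2⟩, hs.le⟩

variable [InnerProductSpace ℝ E]

theorem IsLocalMin.laplacian_nonneg [FiniteDimensional ℝ E] {f : E → ℝ} {x : E}
    (hmin : IsLocalMin f x) (hf : ContDiffAt ℝ 2 f x) : 0 ≤ Δ f x := by
  rw [laplacian_eq_iteratedFDeriv_stdOrthonormalBasis]
  exact Finset.sum_nonneg fun i _ => hmin.iteratedFDeriv_two_nonneg hf _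

-- `I` plays the role of the parabolic interior of `D`, and `D \ I` of its parabolic boundary.
theorem IsCompact.nonneg_of_heat_supersolution [FiniteDimensional ℝ E] {w : E → ℝ → ℝ}
    {D I : Set (E × ℝ)} (hD : IsCompact D) (hcont : ContinuousOn (fun p => w p.1 p.2) D)
    (hspace : ∀ x t, (x, t) ∈ I → ∀ᶠ y in 𝓝 x, (y, t) ∈ D)
    (htime : ∀ x t, (x, t) ∈ I → ∀ᶠ s in 𝓝[<] t, (x, s) ∈ D)
    (hbdry : ∀ x t, (x, t) ∈ D → (x, t) ∉ I → 0 ≤ w x t)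
    (hreg : ∀ x t, (x, t) ∈ I → ContDiffAt ℝ 2 (fun y => w y t) x ∧ DifferentiableAt ℝ (w x) t)
    (hsuper : ∀ x t, (x, t) ∈ I → 0 ≤ deriv (w x) t - Δ (fun y => w y t) x) :
    ∀ x t, (x, t) ∈ D → 0 ≤ w x t := by
  obtain ⟨t₁, ht₁⟩ := (hD.image continuous_snd).bddBelow
  -- `w + ε (t - t₁)` is a strict supersolution, so its minimum over `D` cannot be attained in `I`
  have hpert : ∀ ε > 0, ∀ x t, (x, t) ∈ D → 0 ≤ w x t + ε * (t - t₁) := by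
    intro ε hε
    rcases D.eq_empty_or_nonempty with rfl | hne
    · simp
    obtain ⟨⟨x₀, t₀⟩, hp₀, hmin⟩ := hD.exists_isMinOn hne
      (hcont.add (by fun_prop : Continuous fun p : E × ℝ => ε * (p.2 - t₁)).continuousOn)
    suffices 0 ≤ w x₀ t₀ + ε * (t₀ - t₁) from fun x t hxt => this.trans (hmin hxt)
    by_contra! hneg
    have hI : (x₀, t₀) ∈ I := by
      by_contra hI
      nlinarith [hbdry x₀ t₀ hp₀ hI, ht₁ ⟨_, hp₀, rfl⟩]
    obtain ⟨hw₂, hw₁⟩ := hreg x₀ t₀ hI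
    have hspace_min : IsLocalMin (fun y => w y t₀) x₀ := by
      filter_upwards [hspace x₀ t₀ hI] with y hy
      simpa using hmin hy
    have htime_min : IsMinFilter (fun s => w x₀ s + ε * (s - t₁)) (𝓝[<] t₀) t₀ := by
      filter_upwards [htime x₀ t₀ hI] with s hs using hmin hs
    have hderiv : HasDerivAt (fun s => w x₀ s + ε * (s - t₁)) (deriv (w x₀) t₀ + ε) t₀ := by
      refine hw₁.hasDerivAt.add (((hasDerivAt_id t₀).sub_const t₁).const_mul ε |>.congr_deriv ?_)
      simp
    linarith [hderiv.nonpos_of_isMinFilter_nhdsLT htime_min, hspace_min.laplacian_nonneg hw₂,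
      hsuper x₀ t₀ hI]
  intro x t hxt
  have hlim : Tendsto (fun ε => w x t + ε * (t - t₁)) (𝓝[>] 0) (𝓝 (w x t)) := by
    refine tendsto_nhdsWithin_of_tendsto_nhds ?_
    simpa using ((continuous_id.mul continuous_const).const_add (w x t)).tendsto' 0 _
      (by simp)
  exact ge_of_tendsto hlim (eventually_nhdsWithin_of_forall fun ε hε => hpert ε hε x t hxt)

theorem EuclideanSpace.laplacian_eq_sum_fderiv_fderiv_single {ι : Type*} [Fintype ι]
    [DecidableEq ι] {f : EuclideanSpace ℝ ι → ℝ} {x : EuclideanSpace ℝ ι}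
    (hf : ContDiffAt ℝ 2 f x) :
    Δ f x = ∑ i, fderiv ℝ (fun y => fderiv ℝ f y (EuclideanSpace.single i 1)) x
      (EuclideanSpace.single i 1) := by
  have hf' : DifferentiableAt ℝ (fderiv ℝ f) x :=
    (hf.fderiv_right (m := 1) le_rfl).differentiableAt one_ne_zero
  rw [laplacian_eq_iteratedFDeriv_orthonormalBasis f (EuclideanSpace.basisFun ι ℝ)]
  refine Finset.sum_congr rfl fun i _ => ?_
  rw [iteratedFDeriv_two_apply, EuclideanSpace.basisFun_apply,
    (hf'.hasFDerivAt.clm_apply (hasFDerivAt_const (EuclideanSpace.single i (1 : ℝ)) x)).fderiv]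
  simp

theorem laplacian_sq_sub_norm_sq [FiniteDimensional ℝ E] (G : ℝ) (x : E) :
    Δ (fun y : E => (G - ‖y‖ ^ 2) ^ 2) x = 8 * ‖x‖ ^ 2 - 4 * finrank ℝ E * (G - ‖x‖ ^ 2) := by
  have hf : ContDiff ℝ 2 fun y : E => (G - ‖y‖ ^ 2) ^ 2 :=
    (contDiff_const.sub (contDiff_norm_sq ℝ)).pow 2
  have hline : ∀ e : E, deriv (deriv fun s : ℝ => (G - ‖x + s • e‖ ^ 2) ^ 2) 0
      = 8 * inner ℝ e x ^ 2 - 4 * (G - ‖x‖ ^ 2) * ‖e‖ ^ 2 := fun e => by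
    have : (fun s : ℝ => (G - ‖x + s • e‖ ^ 2) ^ 2)
        = fun s => ((G - ‖x‖ ^ 2) - 2 * inner ℝ e x * s - ‖e‖ ^ 2 * s ^ 2) ^ 2 := by
      funext s
      rw [norm_add_sq_real, inner_smul_right, norm_smul, real_inner_comm, Real.norm_eq_abs,
        mul_pow, sq_abs]
      ring
    rw [this, deriv_deriv_sq_quadratic]
    ring
  let b := stdOrthonormalBasis ℝ E
  rw [laplacian_eq_iteratedFDeriv_orthonormalBasis _ b]
  simp only [← hf.contDiffAt.deriv_deriv_comp_line, hline, b.orthonormal.1, one_pow, mul_one]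
  rw [Finset.sum_sub_distrib, ← Finset.mul_sum]
  have := b.sum_sq_norm_inner_right x
  simp only [Real.norm_eq_abs, sq_abs] at this
  rw [this]
  simp only [Finset.sum_const, Finset.card_univ, Fintype.card_fin, nsmul_eq_mul]
  ring

theorem contDiff_heatBarrier : ContDiff ℝ 2 fun y : E => heatBarrier g α y t :=
  ((contDiff_const.sub (contDiff_norm_sq ℝ)).pow 2).mul contDiff_const

theorem laplacian_heatBarrier [FiniteDimensional ℝ E] (x : E) :
    Δ (fun y : E => heatBarrier g α y t) x
      = g t ^ (-α) * (8 * ‖x‖ ^ 2 - 4 * finrank ℝ E * (g t - ‖x‖ ^ 2)) := by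
  have h : (fun y : E => heatBarrier g α y t) = g t ^ (-α) • fun y : E => (g t - ‖y‖ ^ 2) ^ 2 := by
    funext y
    simp only [heatBarrier, Pi.smul_apply, smul_eq_mul]
    ring
  rw [h, laplacian_smul _ ((contDiff_const.sub (contDiff_norm_sq ℝ)).pow 2).contDiffAt,
    smul_eq_mul, laplacian_sq_sub_norm_sq]

theorem heat_sub_const_mul_heatBarrier_nonneg [FiniteDimensional ℝ E] {u : E → ℝ → ℝ} {c : ℝ}
    {x : E} (hc : 0 ≤ c) (hg : HasDerivAt g a t) (hgt : 0 < g t)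
    (hα : (2 * a + 4 * finrank ℝ E + 8) ^ 2 ≤ 32 * a * α)
    (hu₂ : ContDiffAt ℝ 2 (fun y => u y t) x) (hu₁ : DifferentiableAt ℝ (u x) t)
    (hsuper : 0 ≤ deriv (u x) t - Δ (fun y => u y t) x) :
    0 ≤ deriv (fun s => u x s - c * heatBarrier g α x s) t
      - Δ (fun y => u y t - c * heatBarrier g α y t) x := by
  have hψ : ContDiffAt ℝ 2 (fun y : E => heatBarrier g α y t) x := contDiff_heatBarrier.contDiffAt
  have hΔ : Δ (fun y => u y t - c * heatBarrier g α y t) x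
      = Δ (fun y => u y t) x - c * Δ (fun y : E => heatBarrier g α y t) x := by
    rw [← smul_eq_mul c, ← laplacian_smul c hψ]
    exact hu₂.laplacian_sub (hψ.const_smul c)
  have hd : deriv (fun s => u x s - c * heatBarrier g α x s) t = deriv (u x) t - c * _ :=
    (hu₁.hasDerivAt.sub ((hasDerivAt_heatBarrier x hg hgt).const_mul c)).deriv
  have hsplit : g t ^ (-α) = g t ^ (-α - 1) * g t := by
    rw [← Real.rpow_add_one hgt.ne']; ring_nf
  -- the exponent condition says exactly that this quadratic form in `(F, G)` is nonpositive
  have hform : ∀ F G : ℝ,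
      a * F * (2 * G - α * F) - G * (8 * (G - F) - 4 * finrank ℝ E * F) ≤ 0 := fun F G => by
    nlinarith [mul_nonneg (sub_nonneg.mpr hα) (sq_nonneg F),
      sq_nonneg ((2 * a + 4 * finrank ℝ E + 8) * F - 16 * G)]
  have hpos : 0 ≤ c * g t ^ (-α - 1) := mul_nonneg hc (Real.rpow_nonneg hgt.le _)
  rw [hd, hΔ, laplacian_heatBarrier, hsplit]
  nlinarith [mul_nonpos_of_nonneg_of_nonpos hpos (hform (g t - ‖x‖ ^ 2) (g t))]

theorem heatBarrier_le_of_supersolution [FiniteDimensional ℝ E] {u : E → ℝ → ℝ} {δ c : ℝ}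
    (hδ : 0 < δ) (ha : 0 ≤ a) (had : a + δ ^ 2 ≤ 1)
    (hα : (2 * a + 4 * finrank ℝ E + 8) ^ 2 ≤ 32 * a * α) (hc : 0 ≤ c)
    (hcδ : c * ((δ ^ 2) ^ 2 * (δ ^ 2) ^ (-α)) ≤ 1)
    (hcont : ContinuousOn (fun p : E × ℝ => u p.1 p.2) (closedBall 0 1 ×ˢ Icc (-1 : ℝ) 0))
    (hx : ∀ t ∈ Ioc (-1 : ℝ) 0, ContDiffOn ℝ 2 (fun x => u x t) (ball 0 1))
    (ht : ∀ x ∈ ball (0 : E) 1, ∀ t ∈ Ioc (-1 : ℝ) 0, DifferentiableAt ℝ (u x) t)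
    (hnonneg : ∀ x ∈ closedBall (0 : E) 1, ∀ t ∈ Icc (-1 : ℝ) 0, 0 ≤ u x t)
    (hsuper : ∀ x ∈ ball (0 : E) 1, ∀ t ∈ Ioc (-1 : ℝ) 0,
      0 ≤ deriv (u x) t - Δ (fun y => u y t) x)
    (hinit : ∀ x : E, ‖x‖ ≤ δ → 1 ≤ u x (-1)) {x : E} (hx₀ : ‖x‖ ^ 2 ≤ a + δ ^ 2) :
    c * heatBarrier (fun t => a * (1 + t) + δ ^ 2) α x 0 ≤ u x 0 := by
  set g : ℝ → ℝ := fun t => a * (1 + t) + δ ^ 2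
  have hg : Continuous g := by fun_prop
  have hg' : ∀ t, HasDerivAt g a t := fun t =>
    (((hasDerivAt_id t).const_add 1).const_mul a).add_const (δ ^ 2) |>.congr_deriv (mul_one a)
  have hgpos : ∀ t ∈ Icc (-1 : ℝ) 0, 0 < g t := fun t ht => by
    simp only [g]; nlinarith [ht.1]
  have hg₁ : ∀ t ∈ Icc (-1 : ℝ) 0, g t ≤ 1 := fun t ht => by
    simp only [g]; nlinarith [ht.2]
  let I : Set (E × ℝ) := {p | p.2 ∈ Ioc (-1) 0 ∧ ‖p.1‖ ^ 2 < g p.2}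
  have hI : ∀ y s, (y, s) ∈ I → y ∈ ball (0 : E) 1 ∧ 0 < g s := fun y s ⟨hs, hy⟩ => by
    rw [mem_ball_zero_iff]
    exact ⟨by nlinarith [norm_nonneg y, hg₁ s (Ioc_subset_Icc_self hs)],
      hgpos s (Ioc_subset_Icc_self hs)⟩
  have hu₂ : ∀ y s, (y, s) ∈ I → ContDiffAt ℝ 2 (fun y => u y s) y := fun y s h =>
    (hx s h.1).contDiffAt (isOpen_ball.mem_nhds (hI y s h).1)
  refine sub_nonneg.1 <| (isCompact_paraboloidDomain hg hg₁).nonneg_of_heat_supersolution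
    (w := fun y s => u y s - c * heatBarrier g α y s) (I := I)
    ((hcont.mono (paraboloidDomain_subset hg₁)).sub (continuousOn_const.mul
      (continuousOn_heatBarrier hg fun p hp => (hgpos _ hp.1).ne')))
    (fun y s h => eventually_nhds_mem_paraboloidDomain (Ioc_subset_Icc_self h.1) h.2)
    (fun y s h => eventually_nhdsLT_mem_paraboloidDomain hg h.1 h.2) ?_ ?_ ?_ x 0
    ⟨⟨by norm_num, le_rfl⟩, by simpa [g] using hx₀⟩
  · rintro y s ⟨hs, hy⟩ hyI
    rcases hs.1.eq_or_lt with rfl | hs₁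
    · have hyδ : ‖y‖ ^ 2 ≤ δ ^ 2 := by simpa [g] using hy
      have hB : c * heatBarrier g α y (-1) ≤ 1 := by
        refine le_trans ?_ hcδ
        simpa [g] using mul_le_mul_of_nonneg_left (heatBarrier_le_of_norm_sq_le (α := α) hy) hc
      linarith [hinit y (by nlinarith [norm_nonneg y])]
    · have heq : ‖y‖ ^ 2 = g s := le_antisymm hy (not_lt.1 fun h => hyI ⟨⟨hs₁, hs.2⟩, h⟩)
      rw [heatBarrier_eq_zero_of_norm_sq_eq heq, mul_zero, sub_zero]
      exact hnonneg y (paraboloidDomain_subset hg₁ ⟨hs, hy⟩).1 s hs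
  · exact fun y s h => ⟨(hu₂ y s h).sub (contDiff_const.mul contDiff_heatBarrier).contDiffAt,
      (ht y (hI y s h).1 s h.1).sub
        ((hasDerivAt_heatBarrier y (hg' s) (hI y s h).2).const_mul c).differentiableAt⟩
  · exact fun y s h => heat_sub_const_mul_heatBarrier_nonneg hc (hg' s) (hI y s h).2 hα
      (hu₂ y s h) (ht y (hI y s h).1 s h.1) (hsuper y (hI y s h).1 s h.1)

theorem rpow_two_mul_sub_four_mul_sq_sq_mul_rpow_neg {δ : ℝ} (hδ : 0 < δ) (α : ℝ) :
    δ ^ (2 * α - 4) * ((δ ^ 2) ^ 2 * (δ ^ 2) ^ (-α)) = 1 := by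
  rw [← Real.rpow_natCast_mul hδ.le, ← pow_mul, ← Real.rpow_natCast, ← Real.rpow_add hδ,
    ← Real.rpow_add hδ]
  norm_num [show 2 * α - 4 + (4 + -(2 * α)) = 0 by ring]

theorem barrier_exponent_condition_of_lt {δ n α : ℝ} (hδ : δ ^ 2 ≤ 1 / 16) (hn : 0 ≤ n)
    (hα : (2 * (1 / 4 - δ ^ 2) + 1 + 4 * n) * ((2 * (1 / 4 - δ ^ 2) + 1 + 4 * n) + 8) / (3 / 2)
      < α) :
    (2 * (9 / 16 - δ ^ 2) + 4 * n + 8) ^ 2 ≤ 32 * (9 / 16 - δ ^ 2) * α := by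
  rw [div_lt_iff₀ (by norm_num)] at hα
  have hC : 11 / 8 ≤ 2 * (1 / 4 - δ ^ 2) + 1 + 4 * n := by linarith
  have hα₀ : 0 ≤ α := by nlinarith
  nlinarith [mul_le_mul_of_nonneg_right (by linarith : (16 : ℝ) ≤ 32 * (9 / 16 - δ ^ 2)) hα₀]

theorem heat_barrier_lower_bound_general (N : ℕ) (δ : ℝ) (hδ0 : 0 < δ) (hδ : δ ≤ 1 / 4)
    (u : EuclideanSpace ℝ (Fin N) → ℝ → ℝ)
    (hcont : ContinuousOn (fun p : EuclideanSpace ℝ (Fin N) × ℝ => u p.1 p.2)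
      (closedBall 0 1 ×ˢ Icc (-1 : ℝ) 0))
    (hx : ∀ t ∈ Ioc (-1 : ℝ) 0, ContDiffOn ℝ 2 (fun x => u x t) (ball 0 1))
    (ht : ∀ x ∈ ball (0 : EuclideanSpace ℝ (Fin N)) 1, ∀ t ∈ Ioc (-1 : ℝ) 0,
      DifferentiableAt ℝ (u x) t)
    (hnonneg : ∀ x ∈ closedBall (0 : EuclideanSpace ℝ (Fin N)) 1, ∀ t ∈ Icc (-1 : ℝ) 0,
      0 ≤ u x t)
    (hsuper : ∀ x ∈ ball (0 : EuclideanSpace ℝ (Fin N)) 1, ∀ t ∈ Ioc (-1 : ℝ) 0,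
      0 ≤ deriv (u x) t - ∑ i, fderiv ℝ
        (fun y => fderiv ℝ (fun z => u z t) y (EuclideanSpace.single i 1))
        x (EuclideanSpace.single i 1))
    (hinit : ∀ x : EuclideanSpace ℝ (Fin N), ‖x‖ ≤ δ → 1 ≤ u x (-1)) :
    ∀ α : ℝ, (2 * (1 / 4 - δ ^ 2) + 1 + 4 * N) * ((2 * (1 / 4 - δ ^ 2) + 1 + 4 * N) + 8)
        / (3 / 2) < α →
      ∀ x : EuclideanSpace ℝ (Fin N), ‖x‖ ≤ 1 / 2 →
        (1 / 2 : ℝ) ^ 4 * δ ^ (2 * α - 4) ≤ u x 0 := by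
  intro α hα x hx₀
  have hδ₂ : δ ^ 2 ≤ 1 / 16 := by nlinarith
  have hαa := barrier_exponent_condition_of_lt hδ₂ (Nat.cast_nonneg N) hα
  have hα₀ : 0 ≤ α := by nlinarith [sq_nonneg (2 * (9 / 16 - δ ^ 2) + 4 * (N : ℝ) + 8)]
  have hc := Real.rpow_pos_of_pos hδ0 (2 * α - 4)
  have hsuperΔ : ∀ x ∈ ball (0 : EuclideanSpace ℝ (Fin N)) 1, ∀ t ∈ Ioc (-1 : ℝ) 0,
      0 ≤ deriv (u x) t - Δ (fun y => u y t) x := fun y hy t ht' => by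
    rw [EuclideanSpace.laplacian_eq_sum_fderiv_fderiv_single
      ((hx t ht').contDiffAt (isOpen_ball.mem_nhds hy))]
    exact hsuper y hy t ht'
  have hbarrier := heatBarrier_le_of_supersolution (a := 9 / 16 - δ ^ 2) hδ0 (by linarith)
    (by linarith) (by rwa [finrank_euclideanSpace_fin]) hc.le
    (rpow_two_mul_sub_four_mul_sq_sq_mul_rpow_neg hδ0 α).le hcont hx ht hnonneg hsuperΔ hinit
    (x := x) (by nlinarith [norm_nonneg x])
  refine le_trans ?_ hbarrier
  rw [mul_comm]
  gcongr
  refine le_trans ?_ (sq_sub_norm_sq_le_heatBarrier hα₀ (by norm_num) (by norm_num))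
  have : 5 / 16 ≤ (9 / 16 - δ ^ 2) * (1 + 0) + δ ^ 2 - ‖x‖ ^ 2 := by nlinarith [norm_nonneg x]
  nlinarith

theorem heat_barrier_lower_bound (N : ℕ) (hN : 1 ≤ N) (δ : ℝ) (hδ0 : 0 < δ) (hδ : δ ≤ 1 / 4)
    (u : EuclideanSpace ℝ (Fin N) → ℝ → ℝ)
    (hcont : ContinuousOn (fun p : EuclideanSpace ℝ (Fin N) × ℝ => u p.1 p.2)
      (closedBall 0 1 ×ˢ Icc (-1 : ℝ) 0))
    (hx : ∀ t ∈ Ioc (-1 : ℝ) 0, ContDiffOn ℝ 2 (fun x => u x t) (ball 0 1))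
    (ht : ∀ x ∈ ball (0 : EuclideanSpace ℝ (Fin N)) 1, ∀ t ∈ Ioc (-1 : ℝ) 0,
      DifferentiableAt ℝ (u x) t)
    (hnonneg : ∀ x ∈ closedBall (0 : EuclideanSpace ℝ (Fin N)) 1, ∀ t ∈ Icc (-1 : ℝ) 0,
      0 ≤ u x t)
    (hsuper : ∀ x ∈ ball (0 : EuclideanSpace ℝ (Fin N)) 1, ∀ t ∈ Ioc (-1 : ℝ) 0,
      0 ≤ deriv (u x) t - ∑ i, fderiv ℝ
        (fun y => fderiv ℝ (fun z => u z t) y (EuclideanSpace.single i 1))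
        x (EuclideanSpace.single i 1))
    (hinit : ∀ x : EuclideanSpace ℝ (Fin N), ‖x‖ ≤ δ → 1 ≤ u x (-1)) :
    ∀ α : ℝ, (2 * (1 / 4 - δ ^ 2) + 1 + 4 * N) * ((2 * (1 / 4 - δ ^ 2) + 1 + 4 * N) + 8)
        / (3 / 2) < α →
      ∀ x : EuclideanSpace ℝ (Fin N), ‖x‖ ≤ 1 / 2 →
        (1 / 2 : ℝ) ^ 4 * δ ^ (2 * α - 4) ≤ u x 0 :=
  heat_barrier_lower_bound_general N δ hδ0 hδ u hcont hx ht hnonneg hsuper hinit
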